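/- Let θ = 0.038526551295994, Δ = 0.319418991002646, and M = 100. Let β_2 = (2−6Δ)/(1−2Δ), β_i = 2θ(i+1) for 3 ≤ i ≤ 11, and β_i = 1 for 12 ≤ i ≤ 99. Define v : (0,1) → ℝ by v(x) = 0 for x ∈ [1/2,1); v(x) = 1/(i+1−β_i) for x ∈ [1/(i+1), 1/i) and 2 ≤ i ≤ 99; and v(x) = (100/99)·x for x ∈ (0,1/100). Then for every finite multiset T of reals in (0,1) with Σ_{t∈T} t < 1 and every a ∈ (0,1), it holds that v(a) + Σ_{t∈T} v(t) ≤ 1.44465. -/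
import Mathlib


open scoped BigOperators

noncomputable section

def θ : ℝ := 0.038526551295994

def Δ : ℝ := 0.319418991002646

/-- `β₂ = (2−6Δ)/(1−2Δ)`, `β_i = 2θ(i+1)` for `3 ≤ i ≤ 11`, and `β_i = 1`
for `12 ≤ i ≤ 99`. -/
def β : ℕ → ℝ := fun i =>
  if i = 2 then (2 - 6 * Δ) / (1 - 2 * Δ)
  else if i ≤ 11 then 2 * θ * ((i : ℝ) + 1)
  else 1

/-- The weight function for the second part of the input (no 1-items, M=100):
`v(x) = 0` on `[1/2, 1)`, `v(x) = 1/(i+1−β_i)` on `[1/(i+1), 1/i)` for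
`2 ≤ i ≤ 99` (here `i = ⌈1/x⌉−1`), and `v(x) = (100/99)·x` on `(0, 1/100)`. -/
def v (x : ℝ) : ℝ :=
  if 1 / 2 ≤ x then 0
  else if x < 1 / 100 then (100 / 99) * x
  else 1 / (((⌈1 / x⌉₊ - 1 : ℕ) : ℝ) + 1 - β (⌈1 / x⌉₊ - 1))

lemma beta_le (i : ℕ) (hi : 2 ≤ i) :
    (3 * (1 - 2 * Δ)) * β i ≤ ((i : ℝ) + 1) * (3 * (1 - 2 * Δ) - 1) := by
  unfold β
  split_ifs with h2 h11
  · subst h2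
    apply le_of_eq
    have h : (1 : ℝ) - 2 * Δ ≠ 0 := by norm_num [Δ]
    field_simp
    ring
  · -- 3 ≤ i ≤ 11 : β i = 2θ(i+1), need 3(1-2Δ)·2θ ≤ 3(1-2Δ)-1
    have hpos : (0 : ℝ) < (i : ℝ) + 1 := by positivity
    have key : (3 * (1 - 2 * Δ)) * (2 * θ) ≤ 3 * (1 - 2 * Δ) - 1 := by
      norm_num [θ, Δ]
    calc (3 * (1 - 2 * Δ)) * (2 * θ * ((i : ℝ) + 1))
        = ((i : ℝ) + 1) * ((3 * (1 - 2 * Δ)) * (2 * θ)) := by ring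
      _ ≤ ((i : ℝ) + 1) * (3 * (1 - 2 * Δ) - 1) := by
          exact mul_le_mul_of_nonneg_left key (le_of_lt hpos)
  · -- i ≥ 12 : β i = 1
    have h12 : (12 : ℕ) ≤ i := by omega
    have h12' : (13 : ℝ) ≤ (i : ℝ) + 1 := by
      have : (12 : ℝ) ≤ (i : ℝ) := by exact_mod_cast h12
      linarith
    have key : (3 * (1 - 2 * Δ)) * 1 ≤ (13 : ℝ) * (3 * (1 - 2 * Δ) - 1) := by
      norm_num [Δ]
    have hnn : (0 : ℝ) ≤ 3 * (1 - 2 * Δ) - 1 := by norm_num [Δ]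
    calc (3 * (1 - 2 * Δ)) * 1 ≤ (13 : ℝ) * (3 * (1 - 2 * Δ) - 1) := key
      _ ≤ ((i : ℝ) + 1) * (3 * (1 - 2 * Δ) - 1) :=
          mul_le_mul_of_nonneg_right h12' hnn

lemma denom_ge (n : ℕ) (hn : 3 ≤ n) :
    (n : ℝ) / (3 * (1 - 2 * Δ)) ≤ ((n - 1 : ℕ) : ℝ) + 1 - β (n - 1) := by
  have hC : (0 : ℝ) < 3 * (1 - 2 * Δ) := by norm_num [Δ]
  have hcast : ((n - 1 : ℕ) : ℝ) + 1 = (n : ℝ) := by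
    have : 1 ≤ n := by omega
    push_cast [Nat.cast_sub this]
    ring
  have hb := beta_le (n - 1) (by omega)
  rw [show ((n - 1 : ℕ) : ℝ) + 1 = (n : ℝ) from hcast] at hb ⊢
  rw [div_le_iff₀ hC]
  nlinarith [hb]

lemma v_le_mul (x : ℝ) (hx : 0 < x) : v x ≤ (3 * (1 - 2 * Δ)) * x := by
  have hC : (0 : ℝ) < 3 * (1 - 2 * Δ) := by norm_num [Δ]
  unfold v
  split_ifs with h1 h2
  · positivity
  · have : (100 / 99 : ℝ) ≤ 3 * (1 - 2 * Δ) := by norm_num [Δ]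
    nlinarith
  · push_neg at h1 h2
    set n := ⌈1 / x⌉₊ with hn
    have hx2 : (2 : ℝ) < 1 / x := by
      rw [lt_div_iff₀ hx]; linarith
    have hxn : 1 / x ≤ (n : ℝ) := Nat.le_ceil _
    have hx2' : (2 : ℝ) < x⁻¹ := by rwa [one_div] at hx2
    have hn3 : 3 ≤ n := by
      by_contra h
      push_neg at h
      interval_cases n <;> norm_num at hxn <;> linarith
    have hnpos : (0 : ℝ) < (n : ℝ) := by positivity
    have hxge : 1 / (n : ℝ) ≤ x := by
      rw [div_le_iff₀ hnpos]
      have := (div_le_iff₀ hx).mp hxn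
      linarith
    have hden := denom_ge n hn3
    have hdpos : (0 : ℝ) < ((n - 1 : ℕ) : ℝ) + 1 - β (n - 1) :=
      lt_of_lt_of_le (by positivity) hden
    have step1 : 1 / (((n - 1 : ℕ) : ℝ) + 1 - β (n - 1)) ≤ 1 / ((n : ℝ) / (3 * (1 - 2 * Δ))) :=
      one_div_le_one_div_of_le (by positivity) hden
    have step2 : 1 / ((n : ℝ) / (3 * (1 - 2 * Δ))) = (3 * (1 - 2 * Δ)) * (1 / (n : ℝ)) := by
      field_simp
    calc 1 / (((n - 1 : ℕ) : ℝ) + 1 - β (n - 1))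
        ≤ (3 * (1 - 2 * Δ)) * (1 / (n : ℝ)) := by rw [← step2]; exact step1
      _ ≤ (3 * (1 - 2 * Δ)) * x := mul_le_mul_of_nonneg_left hxge (le_of_lt hC)

lemma sum_map_const_mul (c : ℝ) (s : Multiset ℝ) :
    (s.map (fun t => c * t)).sum = c * s.sum := by
  induction s using Multiset.induction_on with
  | empty => simp
  | cons x s ih => simp [ih, mul_add]

lemma v_le_max (x : ℝ) : v x ≤ 1 - 2 * Δ := by
  unfold v
  split_ifs with h1 h2
  · norm_num [Δ]
  · push_neg at h1
    have : (100 / 99 : ℝ) * x < 100 / 99 * (1 / 100) := by nlinarith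
    have h99 : (1 / 99 : ℝ) ≤ 1 - 2 * Δ := by norm_num [Δ]
    nlinarith
  · push_neg at h1 h2
    have hx : (0 : ℝ) < x := by linarith
    set n := ⌈1 / x⌉₊ with hn
    have hx2 : (2 : ℝ) < 1 / x := by
      rw [lt_div_iff₀ hx]; linarith
    have hxn : 1 / x ≤ (n : ℝ) := Nat.le_ceil _
    have hx2' : (2 : ℝ) < x⁻¹ := by rwa [one_div] at hx2
    have hn3 : 3 ≤ n := by
      by_contra h
      push_neg at h
      interval_cases n <;> norm_num at hxn <;> linarith
    have hC : (0 : ℝ) < 3 * (1 - 2 * Δ) := by norm_num [Δ]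
    have hden := denom_ge n hn3
    have h3C : (3 : ℝ) / (3 * (1 - 2 * Δ)) ≤ (n : ℝ) / (3 * (1 - 2 * Δ)) := by
      apply div_le_div_of_nonneg_right _ hC.le
      exact_mod_cast hn3
    have hden3 : (1 : ℝ) / (1 - 2 * Δ) ≤ ((n - 1 : ℕ) : ℝ) + 1 - β (n - 1) := by
      have : (3 : ℝ) / (3 * (1 - 2 * Δ)) = 1 / (1 - 2 * Δ) := by
        have h0 : (1 : ℝ) - 2 * Δ ≠ 0 := by norm_num [Δ]
        field_simp
      linarith
    have hdpos : (0 : ℝ) < (1 : ℝ) / (1 - 2 * Δ) := by norm_num [Δ]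
    have := one_div_le_one_div_of_le hdpos hden3
    rw [one_div_one_div] at this
    linarith

/-- every bin (a multiset `T` of total size below 1 plus one
additional last item `a`, all sizes in `(0,1)`) has total `v`-weight at most
`1.44465`. -/
theorem stmt11 (T : Multiset ℝ) (hT : ∀ x ∈ T, 0 < x ∧ x < 1)
    (hsum : T.sum < 1) (a : ℝ) (ha : 0 < a) (ha1 : a < 1) :
    v a + (T.map v).sum ≤ 1.44465 := by
  have hC : (0 : ℝ) < 3 * (1 - 2 * Δ) := by norm_num [Δ]
  have hmap : (T.map v).sum ≤ (T.map (fun t => (3 * (1 - 2 * Δ)) * t)).sum := by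
    apply Multiset.sum_map_le_sum_map
    intro t ht
    exact v_le_mul t (hT t ht).1
  have hmul : (T.map (fun t => (3 * (1 - 2 * Δ)) * t)).sum = (3 * (1 - 2 * Δ)) * T.sum := by
    exact sum_map_const_mul _ _
  have h1 : (T.map v).sum ≤ (3 * (1 - 2 * Δ)) * 1 := by
    rw [hmul] at hmap
    calc (T.map v).sum ≤ (3 * (1 - 2 * Δ)) * T.sum := hmap
      _ ≤ (3 * (1 - 2 * Δ)) * 1 := by nlinarith
  have h2 : v a ≤ 1 - 2 * Δ := v_le_max a
  have : (1 - 2 * Δ) + (3 * (1 - 2 * Δ)) * 1 ≤ 1.44465 := by norm_num [Δ]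
  linarith

end
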